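/- arXiv:1203.6286 — 6 statements merged into one kernel-verified Lean document; each statement's English description precedes it below -/
import Mathlib

section
/- Let {φ_t} be a Markov chain on a finite state space S with optimal set S_opt, let d: S → ℝ≥0 be a drift function with d(x) = 0 for x ∈ S_opt and d(x) > 0 otherwise, and let G(x) denote the expected hitting time of S_opt starting from x. If for every non-optimal point x the one-step drift Δ(x) := Σ_{y ∈ S} P(x,y)(d(x) − d(y)) satisfies Δ(x) ≥ 1, then G(x) ≤ d(x) for all x ∈ S. -/
/-!
Put `f = G - d`. Off `opt` the recurrence for `G` and the drift condition give
`f x ≤ ∑ y, P x y * f y`, while `f = 0` on `opt`. If `f` were positive somewhere, the set where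
`f` attains its maximum would avoid `opt` and, by the maximum principle, be closed under the
chain. But a nonempty closed set carries no finite solution of `G x = 1 + ∑ y, P x y * G y`:
at a point of the set where `G` is minimal the recurrence gives `G ≥ 1 + G`.
-/

open Finset

section WeightedSums

variable {S : Type*} [Fintype S] {w : S → ℝ}

theorem sum_mul_const_of_sum_eq_one (hw1 : ∑ y, w y = 1) (c : ℝ) : ∑ y, w y * c = c := by
  rw [← sum_mul, hw1, one_mul]

theorem le_sum_mul_of_le_on_support (hw0 : ∀ y, 0 ≤ w y) (hw1 : ∑ y, w y = 1) {f : S → ℝ}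
    {c : ℝ} (hc : ∀ y, 0 < w y → c ≤ f y) : c ≤ ∑ y, w y * f y :=
  calc c = ∑ y, w y * c := (sum_mul_const_of_sum_eq_one hw1 c).symm
    _ ≤ ∑ y, w y * f y := sum_le_sum fun y _ => by
        rcases (hw0 y).lt_or_eq with hy | hy
        · exact mul_le_mul_of_nonneg_left (hc y hy) hy.le
        · simp [← hy]

theorem eq_of_le_sum_mul_of_forall_le (hw0 : ∀ y, 0 ≤ w y) (hw1 : ∑ y, w y = 1) {f : S → ℝ}
    {M : ℝ} (hle : ∀ y, f y ≤ M) (hM : M ≤ ∑ y, w y * f y) {y : S} (hy : 0 < w y) :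
    f y = M := by
  have hterm : ∀ z ∈ univ, 0 ≤ w z * (M - f z) := fun z _ =>
    mul_nonneg (hw0 z) (sub_nonneg.2 (hle z))
  have hsum : ∑ z, w z * (M - f z) = 0 := by
    refine le_antisymm ?_ (sum_nonneg hterm)
    simp only [mul_sub, sum_sub_distrib, sum_mul_const_of_sum_eq_one hw1]
    linarith
  have hy0 := (sum_eq_zero_iff_of_nonneg hterm).1 hsum y (mem_univ y)
  linarith [(mul_eq_zero.1 hy0).resolve_left hy.ne']

end WeightedSums

section HittingTime

variable {S : Type*} [Fintype S] {P : S → S → ℝ}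

theorem false_of_closed_of_one_add_sum_le (hP0 : ∀ x y, 0 ≤ P x y) (hP1 : ∀ x, ∑ y, P x y = 1)
    {G : S → ℝ} {A : Finset S} (hA : A.Nonempty) (hclosed : ∀ x ∈ A, ∀ y, 0 < P x y → y ∈ A)
    (hG : ∀ x ∈ A, 1 + ∑ y, P x y * G y ≤ G x) : False := by
  obtain ⟨z, hzA, hz⟩ := exists_min_image A G hA
  have : G z ≤ ∑ y, P z y * G y :=
    le_sum_mul_of_le_on_support (hP0 z) (hP1 z) fun y hy => hz y (hclosed z hzA y hy)
  linarith [hG z hzA]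

theorem sub_le_sum_mul_sub_of_drift {G d : S → ℝ} {x : S} (hP1 : ∑ y, P x y = 1)
    (hG : G x = 1 + ∑ y, P x y * G y) (hdrift : 1 ≤ ∑ y, P x y * (d x - d y)) :
    G x - d x ≤ ∑ y, P x y * (G y - d y) := by
  simp only [mul_sub, sum_sub_distrib, sum_mul_const_of_sum_eq_one hP1] at hdrift ⊢
  linarith

end HittingTime

theorem stmt0_general {S : Type*} [Fintype S]
    (P : S → S → ℝ) (opt : Set S) (d G : S → ℝ)
    (hP0 : ∀ x y, 0 ≤ P x y) (hP1 : ∀ x, ∑ y, P x y = 1)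
    (hdopt : ∀ x ∈ opt, d x = 0)
    (hGopt : ∀ x ∈ opt, G x = 0)
    (hGrec : ∀ x ∉ opt, G x = 1 + ∑ y, P x y * G y)
    (hdrift : ∀ x ∉ opt, 1 ≤ ∑ y, P x y * (d x - d y)) :
    ∀ x, G x ≤ d x := by
  intro x₀
  by_contra! hx₀
  set f : S → ℝ := fun x => G x - d x
  obtain ⟨m, -, hm⟩ := exists_max_image univ f ⟨x₀, mem_univ x₀⟩
  have hfm : 0 < f m := (sub_pos.2 hx₀).trans_le (hm x₀ (mem_univ x₀))
  set A := univ.filter fun y => f y = f m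
  have hA_opt : ∀ x ∈ A, x ∉ opt := fun x hx hopt => by
    simp [A, f, hGopt x hopt, hdopt x hopt] at hx
    linarith
  refine false_of_closed_of_one_add_sum_le hP0 hP1 (A := A) ⟨m, by simp [A]⟩ ?_
    fun x hx => (hGrec x (hA_opt x hx)).ge
  intro x hx y hy
  have hfx : f x = f m := (mem_filter.1 hx).2
  have hsub := sub_le_sum_mul_sub_of_drift (hP1 x) (hGrec x (hA_opt x hx)) (hdrift x (hA_opt x hx))
  simp only [A, mem_filter, mem_univ, true_and]
  exact eq_of_le_sum_mul_of_forall_le (hP0 x) (hP1 x) (fun y => hm y (mem_univ y))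
    (hfx ▸ hsub) hy

/-- Drift analysis upper bound: if the one-step drift with respect to a drift
function `d` (nonnegative, zero exactly on the optimal set) is at least 1 at
every non-optimal point, then the expected hitting time `G` of the optimal set
satisfies `G x ≤ d x` everywhere.  Here `G` is characterized as the (finite)
expected first hitting time of `opt`: it is nonnegative, vanishes on `opt`,
and satisfies the one-step recurrence off `opt`. -/
theorem stmt0 {S : Type*} [Fintype S]
    (P : S → S → ℝ) (opt : Set S) (d G : S → ℝ)
    (hP0 : ∀ x y, 0 ≤ P x y) (hP1 : ∀ x, ∑ y, P x y = 1)
    (hd0 : ∀ x, 0 ≤ d x)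
    (hdopt : ∀ x ∈ opt, d x = 0) (hdpos : ∀ x ∉ opt, 0 < d x)
    (hG0 : ∀ x, 0 ≤ G x) (hGopt : ∀ x ∈ opt, G x = 0)
    (hGrec : ∀ x ∉ opt, G x = 1 + ∑ y, P x y * G y)
    (hdrift : ∀ x ∉ opt, 1 ≤ ∑ y, P x y * (d x - d y)) :
    ∀ x, G x ≤ d x :=
  stmt0_general P opt d G hP0 hP1 hdopt hGopt hGrec hdrift
end

section
/- Let an elitist (1+1) EA with fixed mutation kernel P^m(x,y) act on a finite set S, accepting a mutant y from parent x iff f(y) > f(x). Let f and g be two fitness functions on S with the same optimal set S_opt, and let G_f, G_g denote the expected hitting times of S_opt under fitness f and g respectively (both assumed finite). If f satisfies the monotonically decreasing condition — for any two points x, y with G_f(x) < G_f(y) one has f(x) > f(y) — then G_f(x) ≤ G_g(x) for every x ∈ S. -/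
/-!
Under the monotonically decreasing condition the EA on `f` accepts exactly the mutants that
do not increase `G_f`, so one step of the `f`-chain decreases `G_f` at least as much as one
step of the `g`-chain. Hence `G_f` is a subsolution of the hitting-time equations of the
`g`-chain, and the maximum principle for the stochastic matrix of that chain gives
`G_f ≤ G_g`.
-/

open Finset

/-- Transition kernel of the strictly elitist (1+1) EA with mutation kernel
`Pm` and fitness `f`: a mutant `y ≠ x` is accepted iff `f y > f x`, otherwise
the EA stays at `x`. -/
noncomputable def eaP {S : Type*} [Fintype S] [DecidableEq S]
    (Pm : S → S → ℝ) (f : S → ℝ) (x y : S) : ℝ :=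
  if y = x then 1 - ∑ z, (if f x < f z then Pm x z else 0)
  else if f x < f y then Pm x y else 0

section MaximumPrinciple

variable {S : Type*} [Fintype S] {P : S → S → ℝ}

theorem eq_of_isMax_of_le_sum_mul (hP0 : ∀ x y, 0 ≤ P x y) (hP1 : ∀ x, ∑ y, P x y = 1)
    {w : S → ℝ} {x : S} (hmax : ∀ y, w y ≤ w x) (hx : w x ≤ ∑ y, P x y * w y)
    {y : S} (hy : P x y ≠ 0) : w y = w x := by
  have hnonneg : ∀ z ∈ univ, 0 ≤ P x z * (w x - w z) :=
    fun z _ => mul_nonneg (hP0 x z) (sub_nonneg.mpr (hmax z))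
  have hsum : ∑ z, P x z * (w x - w z) = w x - ∑ z, P x z * w z := by
    simp only [mul_sub, sum_sub_distrib, ← sum_mul, hP1, one_mul]
  have hzero : ∑ z, P x z * (w x - w z) = 0 :=
    le_antisymm (by linarith) (sum_nonneg hnonneg)
  have := (sum_eq_zero_iff_of_nonneg hnonneg).mp hzero y (mem_univ y)
  rcases mul_eq_zero.mp this with h | h
  · exact absurd h hy
  · linarith

theorem le_of_subsolution_of_solution (hP0 : ∀ x y, 0 ≤ P x y) (hP1 : ∀ x, ∑ y, P x y = 1)
    (opt : Set S) {u v : S → ℝ} (hopt : ∀ x ∈ opt, u x ≤ v x)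
    (hu : ∀ x ∉ opt, u x ≤ 1 + ∑ y, P x y * u y)
    (hv : ∀ x ∉ opt, v x = 1 + ∑ y, P x y * v y) :
    ∀ x, u x ≤ v x := by
  classical
  by_contra! ⟨x, hvu⟩
  obtain ⟨xm, -, hxm⟩ := exists_max_image univ (fun z => u z - v z) ⟨x, mem_univ x⟩
  set A := univ.filter fun z => ∀ y, u y - v y ≤ u z - v z
  obtain ⟨x₀, hx₀A, hx₀min⟩ :=
    exists_min_image A v ⟨xm, mem_filter.mpr ⟨mem_univ xm, fun y => hxm y (mem_univ y)⟩⟩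
  have hx₀max : ∀ y, u y - v y ≤ u x₀ - v x₀ := (mem_filter.mp hx₀A).2
  have hx₀opt : x₀ ∉ opt := fun h => by linarith [hopt x₀ h, hx₀max x]
  have hvx₀ := hv x₀ hx₀opt
  have hsub : u x₀ - v x₀ ≤ ∑ y, P x₀ y * (u y - v y) := by
    simp only [mul_sub, sum_sub_distrib]
    linarith [hu x₀ hx₀opt]
  -- `A` is closed under the chain started at its `v`-minimizer `x₀`, so `v x₀ ≥ 1 + v x₀`.
  have hsupp : ∀ y, v x₀ * P x₀ y ≤ P x₀ y * v y := fun y => by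
    by_cases hy : P x₀ y = 0
    · simp [hy]
    · have hyA : y ∈ A := mem_filter.mpr ⟨mem_univ y, fun z => by
        rw [eq_of_isMax_of_le_sum_mul hP0 hP1 hx₀max hsub hy]; exact hx₀max z⟩
      rw [mul_comm]
      exact mul_le_mul_of_nonneg_left (hx₀min y hyA) (hP0 x₀ y)
  have := sum_le_sum fun y (_ : y ∈ univ) => hsupp y
  rw [← mul_sum, hP1, mul_one] at this
  linarith

end MaximumPrinciple

section ElitistEA

variable {S : Type*} [Fintype S] [DecidableEq S] (Pm : S → S → ℝ)

theorem sum_eaP (f : S → ℝ) (x : S) : ∑ y, eaP Pm f x y = 1 := by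
  rw [← add_sum_erase _ _ (mem_univ x)]
  have hoff : ∑ y ∈ univ.erase x, eaP Pm f x y = ∑ y, if f x < f y then Pm x y else 0 := by
    rw [← sum_erase univ (f := fun y => if f x < f y then Pm x y else 0) (a := x) (by simp)]
    exact sum_congr rfl fun y hy => by simp [eaP, ne_of_mem_erase hy]
  rw [hoff]
  simp [eaP]

theorem eaP_nonneg (hPm0 : ∀ x y, 0 ≤ Pm x y) (hPm1 : ∀ x, ∑ y, Pm x y = 1) (f : S → ℝ)
    (x y : S) : 0 ≤ eaP Pm f x y := by
  unfold eaP
  split_ifs with hyx hxy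
  · have : ∑ z, (if f x < f z then Pm x z else 0) ≤ ∑ z, Pm x z :=
      sum_le_sum fun z _ => by split_ifs <;> simp [hPm0 x z]
    linarith [hPm1 x]
  · exact hPm0 x y
  · exact le_rfl

theorem sum_eaP_mul (f G : S → ℝ) (x : S) :
    ∑ y, eaP Pm f x y * G y = G x + ∑ y, if f x < f y then Pm x y * (G y - G x) else 0 := by
  have hterm : ∀ y, eaP Pm f x y * G y
      = eaP Pm f x y * G x + if f x < f y then Pm x y * (G y - G x) else 0 := fun y => by
    by_cases hyx : y = x
    · subst hyx; simp
    · simp only [eaP, if_neg hyx]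
      split_ifs <;> ring
  rw [sum_congr rfl fun y _ => hterm y, sum_add_distrib, ← sum_mul, sum_eaP, one_mul]

/-- When `f` strictly decreases along strict increases of `G`, the `f`-EA accepts a mutant
exactly when it does not increase `G`, which is the best any fitness can do. -/
theorem sum_eaP_mul_le_of_antitone (hPm0 : ∀ x y, 0 ≤ Pm x y) {f G : S → ℝ}
    (hmono : ∀ x y, G x < G y → f y < f x) (g : S → ℝ) (x : S) :
    ∑ y, eaP Pm f x y * G y ≤ ∑ y, eaP Pm g x y * G y := by
  rw [sum_eaP_mul, sum_eaP_mul]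
  gcongr with y
  by_cases hf : f x < f y
  · have hGy : G y ≤ G x := not_lt.mp fun h => (hmono x y h).not_gt hf
    rw [if_pos hf]
    split_ifs
    exacts [le_rfl, mul_nonpos_of_nonneg_of_nonpos (hPm0 x y) (by linarith)]
  · have hGy : G x ≤ G y := not_lt.mp fun h => hf (hmono y x h)
    rw [if_neg hf]
    split_ifs
    exacts [mul_nonneg (hPm0 x y) (by linarith), le_rfl]

end ElitistEA

theorem stmt4_general {S : Type*} [Fintype S] [DecidableEq S]
    (Pm : S → S → ℝ) (opt : Set S) (f g Gf Gg : S → ℝ)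
    (hPm0 : ∀ x y, 0 ≤ Pm x y) (hPm1 : ∀ x, ∑ y, Pm x y = 1)
    (hGfopt : ∀ x ∈ opt, Gf x = 0)
    (hGfrec : ∀ x ∉ opt, Gf x = 1 + ∑ y, eaP Pm f x y * Gf y)
    (hGgopt : ∀ x ∈ opt, Gg x = 0)
    (hGgrec : ∀ x ∉ opt, Gg x = 1 + ∑ y, eaP Pm g x y * Gg y)
    (hmono : ∀ x y, Gf x < Gf y → f y < f x) :
    ∀ x, Gf x ≤ Gg x := by
  refine le_of_subsolution_of_solution (eaP_nonneg Pm hPm0 hPm1 g) (sum_eaP Pm g) opt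
    (fun x hx => (hGfopt x hx).trans_le (hGgopt x hx).ge) (fun x hx => ?_) hGgrec
  rw [hGfrec x hx]
  gcongr 1 + ?_
  exact sum_eaP_mul_le_of_antitone Pm hPm0 hmono g x

/-- Criterion for the easiest function: if `f` satisfies the monotonically
decreasing condition (`G_f x < G_f y` implies `f x > f y`), then for any
fitness `g` with the same optimal set (the common set of global maxima),
the expected runtime satisfies `G_f x ≤ G_g x` for every `x`. -/
theorem stmt4 {S : Type*} [Fintype S] [DecidableEq S]
    (Pm : S → S → ℝ) (opt : Set S) (f g Gf Gg : S → ℝ)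
    (hPm0 : ∀ x y, 0 ≤ Pm x y) (hPm1 : ∀ x, ∑ y, Pm x y = 1)
    (hne : opt.Nonempty)
    (hoptf : ∀ x, x ∈ opt ↔ ∀ y, f y ≤ f x)
    (hoptg : ∀ x, x ∈ opt ↔ ∀ y, g y ≤ g x)
    (hGf0 : ∀ x, 0 ≤ Gf x) (hGfopt : ∀ x ∈ opt, Gf x = 0)
    (hGfrec : ∀ x ∉ opt, Gf x = 1 + ∑ y, eaP Pm f x y * Gf y)
    (hGg0 : ∀ x, 0 ≤ Gg x) (hGgopt : ∀ x ∈ opt, Gg x = 0)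
    (hGgrec : ∀ x ∉ opt, Gg x = 1 + ∑ y, eaP Pm g x y * Gg y)
    (hmono : ∀ x y, Gf x < Gf y → f y < f x) :
    ∀ x, Gf x ≤ Gg x :=
  stmt4_general Pm opt f g Gf Gg hPm0 hPm1 hGfopt hGfrec hGgopt hGgrec hmono
end

section
/- Let S be a finite set with a designated nonempty subset S_opt and a mutation kernel P^m. Define subsets S_0 = S_opt, G'(x) = 0 on S_0, and recursively let S_l be the set of minimizers over x ∈ S \ (S_0 ∪ … ∪ S_{l−1}) of (1 + Σ_{k<l} Σ_{y ∈ S_k} P^m(x,y) G'(y)) / (Σ_{k<l} Σ_{y ∈ S_k} P^m(x,y)), with G'(x) set to this minimal value on S_l. Assume these denominators are always positive so that the construction terminates with S = S_0 ∪ … ∪ S_L. Then G' is strictly increasing along levels: for all x ∈ S_{l+1} and y ∈ S_l, G'(x) > G'(y). -/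
/-- The quotient appearing in the greedy level construction:
`(1 + Σ_{ℓ y < l} Pm x y * G' y) / (Σ_{ℓ y < l} Pm x y)`. -/
noncomputable def Qval {S : Type*} [Fintype S]
    (Pm : S → S → ℝ) (ℓ : S → ℕ) (G' : S → ℝ) (l : ℕ) (x : S) : ℝ :=
  (1 + ∑ y, (if ℓ y < l then Pm x y * G' y else 0)) /
    (∑ y, (if ℓ y < l then Pm x y else 0))

/-- In the greedy (minimizing) level construction for the easiest function —
`S_0 = S_opt` with `G' = 0`, and `S_l` the set of minimizers of the quotient
`Qval` over the points not yet assigned, with `G'` set to the minimal value —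
the value `G'` is strictly increasing along levels: `G' y < G' x` whenever
`x` lies one level above `y`.  Levels are encoded by `ℓ : S → ℕ`. -/
theorem stmt6 {S : Type*} [Fintype S]
    (Pm : S → S → ℝ) (opt : Set S) (ℓ : S → ℕ) (G' : S → ℝ)
    (hPm0 : ∀ x y, 0 ≤ Pm x y) (hPm1 : ∀ x, ∑ y, Pm x y = 1)
    (hne : opt.Nonempty)
    (hℓ0 : ∀ x, ℓ x = 0 ↔ x ∈ opt)
    (hG'0 : ∀ x, ℓ x = 0 → G' x = 0)
    (hden : ∀ (l : ℕ) (x : S), 1 ≤ l → l ≤ ℓ x →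
      0 < ∑ y, (if ℓ y < l then Pm x y else 0))
    (hval : ∀ x, 1 ≤ ℓ x → G' x = Qval Pm ℓ G' (ℓ x) x)
    (hmin : ∀ x z, 1 ≤ ℓ x → ℓ x ≤ ℓ z →
      Qval Pm ℓ G' (ℓ x) x ≤ Qval Pm ℓ G' (ℓ x) z)
    (hstrict : ∀ x z, 1 ≤ ℓ x → ℓ x < ℓ z →
      Qval Pm ℓ G' (ℓ x) x < Qval Pm ℓ G' (ℓ x) z) :
    ∀ x y, ℓ x = ℓ y + 1 → G' y < G' x := by
  intro x y hxy
  rcases Nat.eq_zero_or_pos (ℓ y) with h0 | hpos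
  · -- base case: `ℓ y = 0`, so `G' y = 0` and `G' x = 1 / D > 0`
    have hG'y : G' y = 0 := hG'0 y h0
    have hℓx : ℓ x = 1 := by omega
    have hD : 0 < ∑ w, (if ℓ w < 1 then Pm x w else 0) :=
      hden 1 x le_rfl (by omega)
    have hGx : G' x = Qval Pm ℓ G' 1 x := by
      have := hval x (by omega); rwa [hℓx] at this
    have hnum : (∑ w, (if ℓ w < 1 then Pm x w * G' w else 0)) = 0 := by
      apply Finset.sum_eq_zero
      intro w _
      split_ifs with h
      · rw [hG'0 w (by omega), mul_zero]
      · rfl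
    rw [hG'y, hGx, Qval, hnum, add_zero]
    exact div_pos one_pos hD
  · -- main case: `l := ℓ y ≥ 1`
    set l := ℓ y with hl
    have h1 : 1 ≤ l := hpos
    -- all points on level `l` have the same `G'` value
    have hsame : ∀ w, ℓ w = l → G' w = G' y := by
      intro w hw
      have h1w : 1 ≤ ℓ w := by omega
      have h1' := hmin y w h1 (by omega)
      have h2' := hmin w y h1w (by omega)
      rw [hw] at h2'
      rw [hval w h1w, hval y h1, hw]
      exact le_antisymm h2' h1'
    have hD : 0 < ∑ w, (if ℓ w < l then Pm x w else 0) :=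
      hden l x h1 (by omega)
    have hD' : 0 < ∑ w, (if ℓ w < l + 1 then Pm x w else 0) :=
      hden (l + 1) x (by omega) (by omega)
    have ha : 0 ≤ ∑ w, (if ℓ w = l then Pm x w else 0) := by
      apply Finset.sum_nonneg
      intro w _
      split_ifs
      · exact hPm0 x w
      · exact le_refl 0
    have hstr := hstrict y x h1 (by omega)
    rw [← hval y h1] at hstr
    rw [Qval] at hstr
    have hN : G' y * (∑ w, (if ℓ w < l then Pm x w else 0))
        < 1 + ∑ w, (if ℓ w < l then Pm x w * G' w else 0) :=
      (lt_div_iff₀ hD).mp hstr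
    have hNsplit : (∑ w, (if ℓ w < l + 1 then Pm x w * G' w else 0))
        = (∑ w, (if ℓ w < l then Pm x w * G' w else 0))
          + (∑ w, (if ℓ w = l then Pm x w else 0)) * G' y := by
      rw [Finset.sum_mul, ← Finset.sum_add_distrib]
      apply Finset.sum_congr rfl
      intro w _
      by_cases hlt : ℓ w < l
      · have : ℓ w ≠ l := by omega
        simp [hlt, Nat.lt_succ_of_lt hlt, this]
      · by_cases heq : ℓ w = l
        · simp [hlt, heq, hsame w heq]
        · have : ¬ ℓ w < l + 1 := by omega
          simp [hlt, heq, this]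
    have hDsplit : (∑ w, (if ℓ w < l + 1 then Pm x w else 0))
        = (∑ w, (if ℓ w < l then Pm x w else 0))
          + (∑ w, (if ℓ w = l then Pm x w else 0)) := by
      rw [← Finset.sum_add_distrib]
      apply Finset.sum_congr rfl
      intro w _
      by_cases hlt : ℓ w < l
      · have : ℓ w ≠ l := by omega
        simp [hlt, Nat.lt_succ_of_lt hlt, this]
      · by_cases heq : ℓ w = l
        · simp [hlt, heq]
        · have : ¬ ℓ w < l + 1 := by omega
          simp [hlt, heq, this]
    have hGx : G' x = Qval Pm ℓ G' (l + 1) x := by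
      have := hval x (by omega); rwa [hxy] at this
    rw [hGx, Qval, lt_div_iff₀ hD', hNsplit, hDsplit]
    nlinarith [hN]
end

section
/- Let S be a finite set with optimal set S_opt and mutation kernel P^m. Construct S_0 = S_opt with G'(x) = 0, and recursively let S_l be the set of maximizers over x ∈ S \ (S_0 ∪ … ∪ S_{l−1}) of (1 + Σ_{k<l} Σ_{y ∈ S_k} P^m(x,y) G'(y)) / (Σ_{k<l} Σ_{y ∈ S_k} P^m(x,y)), with G'(x) set to this maximal value. Choose f_0 > f_1 > … > f_L > 0 and define f(x) = f_l for x ∈ S_l. Then for every fitness function g on S with optimal set S_opt, the expected runtime of the elitist (1+1) EA satisfies G_f(x) ≥ G_g(x) for all x ∈ S; i.e., f is the hardest function in the class. -/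
/-- The function `f` produced by the greedy maximizing level construction
(constant on each level `S_l`, strictly decreasing and positive in the level
index) is the hardest function in the class of all fitness functions with
optimal set `opt`: for every such `g`, the expected runtime satisfies
`G_f x ≥ G_g x` for all `x`. -/
theorem stmt8 {S : Type*} [Fintype S] [DecidableEq S]
    (Pm : S → S → ℝ) (opt : Set S) (ℓ : S → ℕ) (G' : S → ℝ) (f : S → ℝ)
    (hPm0 : ∀ x y, 0 ≤ Pm x y) (hPm1 : ∀ x, ∑ y, Pm x y = 1)
    (hne : opt.Nonempty)
    (hℓ0 : ∀ x, ℓ x = 0 ↔ x ∈ opt)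
    (hG'0 : ∀ x, ℓ x = 0 → G' x = 0)
    (hden : ∀ (l : ℕ) (x : S), 1 ≤ l → l ≤ ℓ x →
      0 < ∑ y, (if ℓ y < l then Pm x y else 0))
    (hval : ∀ x, 1 ≤ ℓ x → G' x = Qval Pm ℓ G' (ℓ x) x)
    (hmax : ∀ x z, 1 ≤ ℓ x → ℓ x ≤ ℓ z →
      Qval Pm ℓ G' (ℓ x) z ≤ Qval Pm ℓ G' (ℓ x) x)
    -- `f` takes the value `f_l` on level `S_l`, with `f_0 > f_1 > ⋯ > f_L`
    (hfconst : ∀ x y, ℓ x = ℓ y → f x = f y)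
    (hfdec : ∀ x y, ℓ x < ℓ y → f y < f x)
    (hfpos : ∀ x, 0 < f x)
    -- expected runtime of the elitist (1+1) EA on `f`
    (Gf : S → ℝ)
    (hGf0 : ∀ x, 0 ≤ Gf x) (hGfopt : ∀ x ∈ opt, Gf x = 0)
    (hGfrec : ∀ x ∉ opt, Gf x = 1 + ∑ y, eaP Pm f x y * Gf y) :
    ∀ (g Gg : S → ℝ),
      (∀ x, x ∈ opt ↔ ∀ y, g y ≤ g x) →
      (∀ x, 0 ≤ Gg x) → (∀ x ∈ opt, Gg x = 0) →
      (∀ x ∉ opt, Gg x = 1 + ∑ y, eaP Pm g x y * Gg y) →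
      ∀ x, Gg x ≤ Gf x := by
  classical
  intro g Gg hgo hGg0 hGgopt hGgrec
  -- nonnegativity of G'
  have hG'nn : ∀ n x, ℓ x ≤ n → 0 ≤ G' x := by
    intro n
    induction n with
    | zero => intro x hx; rw [hG'0 x (Nat.le_zero.mp hx)]
    | succ n ih =>
      intro x hx
      rcases Nat.eq_zero_or_pos (ℓ x) with h0 | h1
      · rw [hG'0 x h0]
      · rw [hval x h1]
        unfold Qval
        apply div_nonneg
        · have hs : 0 ≤ ∑ y, (if ℓ y < ℓ x then Pm x y * G' y else 0) := by
            apply Finset.sum_nonneg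
            intro y _
            by_cases h : ℓ y < ℓ x
            · simp only [h, if_true]
              exact mul_nonneg (hPm0 x y) (ih y (by omega))
            · simp [h]
          linarith
        · exact le_of_lt (hden (ℓ x) x h1 le_rfl)
  have hG'nonneg : ∀ x, 0 ≤ G' x := fun x => hG'nn (ℓ x) x le_rfl
  -- equality form of hval
  have hvalEq : ∀ x, 1 ≤ ℓ x →
      1 + ∑ y, (if ℓ y < ℓ x then Pm x y * G' y else 0)
        = (∑ y, (if ℓ y < ℓ x then Pm x y else 0)) * G' x := by
    intro x h1
    have hd := hden (ℓ x) x h1 le_rfl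
    have hv := hval x h1
    unfold Qval at hv
    rw [eq_div_iff (ne_of_gt hd)] at hv
    linarith [hv]
  -- numerator form of hmax
  have hmaxN : ∀ x z, 1 ≤ ℓ x → ℓ x ≤ ℓ z →
      1 + ∑ y, (if ℓ y < ℓ x then Pm z y * G' y else 0)
        ≤ (∑ y, (if ℓ y < ℓ x then Pm z y else 0)) * G' x := by
    intro x z h1 hle
    have hd := hden (ℓ x) z h1 hle
    have hm := hmax x z h1 hle
    rw [← hval x h1] at hm
    unfold Qval at hm
    rw [div_le_iff₀ hd] at hm
    linarith [hm]
  -- G' is antitone in level (on levels ≥ 1)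
  have hMONO : ∀ n z x, ℓ z ≤ n → 1 ≤ ℓ x → ℓ x ≤ ℓ z → G' z ≤ G' x := by
    intro n
    induction n with
    | zero => intro z x hz h1 hle; omega
    | succ n ih =>
      intro z x hz h1 hle
      have hm1 : 1 ≤ ℓ z := le_trans h1 hle
      have hdm := hden (ℓ z) z hm1 le_rfl
      -- sum splits
      have hsplitN : ∑ y, (if ℓ y < ℓ z then Pm z y * G' y else 0)
          = (∑ y, (if ℓ y < ℓ x then Pm z y * G' y else 0))
            + ∑ y, (if ℓ x ≤ ℓ y ∧ ℓ y < ℓ z then Pm z y * G' y else 0) := by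
        rw [← Finset.sum_add_distrib]
        refine Finset.sum_congr rfl fun y _ => ?_
        rcases lt_or_ge (ℓ y) (ℓ x) with h | h
        · have h2 : ℓ y < ℓ z := lt_of_lt_of_le h hle
          have h3 : ¬ ℓ x ≤ ℓ y := by omega
          simp [h, h2, h3]
        · have h3 : ¬ ℓ y < ℓ x := by omega
          by_cases h2 : ℓ y < ℓ z <;> simp [h, h2, h3]
      have hsplitD : ∑ y, (if ℓ y < ℓ z then Pm z y else 0)
          = (∑ y, (if ℓ y < ℓ x then Pm z y else 0))
            + ∑ y, (if ℓ x ≤ ℓ y ∧ ℓ y < ℓ z then Pm z y else 0) := by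
        rw [← Finset.sum_add_distrib]
        refine Finset.sum_congr rfl fun y _ => ?_
        rcases lt_or_ge (ℓ y) (ℓ x) with h | h
        · have h2 : ℓ y < ℓ z := lt_of_lt_of_le h hle
          have h3 : ¬ ℓ x ≤ ℓ y := by omega
          simp [h, h2, h3]
        · have h3 : ¬ ℓ y < ℓ x := by omega
          by_cases h2 : ℓ y < ℓ z <;> simp [h, h2, h3]
      have hhigh : ∑ y, (if ℓ x ≤ ℓ y ∧ ℓ y < ℓ z then Pm z y * G' y else 0)
          ≤ (∑ y, (if ℓ x ≤ ℓ y ∧ ℓ y < ℓ z then Pm z y else 0)) * G' x := by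
        rw [Finset.sum_mul]
        apply Finset.sum_le_sum
        intro y _
        split_ifs with h
        · exact mul_le_mul_of_nonneg_left (ih y x (by omega) h1 h.1) (hPm0 z y)
        · simp
      have hNl := hmaxN x z h1 hle
      have hle2 : 1 + ∑ y, (if ℓ y < ℓ z then Pm z y * G' y else 0)
          ≤ (∑ y, (if ℓ y < ℓ z then Pm z y else 0)) * G' x := by
        rw [hsplitN, hsplitD, add_mul]
        linarith
      have hgz : G' z = (1 + ∑ y, (if ℓ y < ℓ z then Pm z y * G' y else 0))
          / (∑ y, (if ℓ y < ℓ z then Pm z y else 0)) := hval z hm1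
      rw [hgz, div_le_iff₀ hdm]
      linarith [hle2, mul_comm (G' x) (∑ y, (if ℓ y < ℓ z then Pm z y else 0))]
  -- main induction: Gg ≤ G'
  have hGG' : ∀ n x, (Finset.univ.filter fun y => g x < g y).card ≤ n → Gg x ≤ G' x := by
    intro n
    induction n with
    | zero =>
      intro x hx
      have hopt : x ∈ opt := by
        rw [hgo x]
        intro y
        by_contra hy
        push_neg at hy
        have hmem : y ∈ Finset.univ.filter fun z => g x < g z := by simp [hy]
        have := Finset.card_pos.mpr ⟨y, hmem⟩
        omega
      rw [hGgopt x hopt]; exact hG'nonneg x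
    | succ n ih =>
      intro x hx
      by_cases hopt : x ∈ opt
      · rw [hGgopt x hopt]; exact hG'nonneg x
      · have hl1 : 1 ≤ ℓ x := by
          rcases Nat.eq_zero_or_pos (ℓ x) with h | h
          · exact absurd ((hℓ0 x).mp h) hopt
          · exact h
        have hrec := hGgrec x hopt
        have hterm : ∀ y, eaP Pm g x y * Gg y
            = (if y = x then (1 - ∑ z, (if g x < g z then Pm x z else 0)) * Gg x else 0)
              + (if g x < g y then Pm x y * Gg y else 0) := by
          intro y
          by_cases hy : y = x
          · subst hy; simp [eaP, lt_irrefl]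
          · simp only [eaP, hy, if_false]
            split_ifs <;> ring
        have hexp : ∑ y, eaP Pm g x y * Gg y
            = (1 - ∑ z, (if g x < g z then Pm x z else 0)) * Gg x
              + ∑ y, (if g x < g y then Pm x y * Gg y else 0) := by
          simp only [hterm]
          rw [Finset.sum_add_distrib, Finset.sum_ite_eq' Finset.univ x]
          simp
        rw [hexp] at hrec
        have hqGg : (∑ z, (if g x < g z then Pm x z else 0)) * Gg x
            = 1 + ∑ y, (if g x < g y then Pm x y * Gg y else 0) := by nlinarith [hrec]
        have hT0 : 0 ≤ ∑ y, (if g x < g y then Pm x y * Gg y else 0) :=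
          Finset.sum_nonneg fun y _ => by
            split_ifs
            · exact mul_nonneg (hPm0 x y) (hGg0 y)
            · exact le_refl 0
        have hq0 : 0 ≤ ∑ z, (if g x < g z then Pm x z else 0) :=
          Finset.sum_nonneg fun z _ => by
            split_ifs
            · exact hPm0 x z
            · exact le_refl 0
        have hqpos : 0 < ∑ z, (if g x < g z then Pm x z else 0) := by
          rcases lt_or_eq_of_le hq0 with h | h
          · exact h
          · exfalso; rw [← h, zero_mul] at hqGg; linarith
        -- induction hypothesis termwise
        have hTT' : ∑ y, (if g x < g y then Pm x y * Gg y else 0)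
            ≤ ∑ y, (if g x < g y then Pm x y * G' y else 0) := by
          apply Finset.sum_le_sum
          intro y _
          split_ifs with h
          · refine mul_le_mul_of_nonneg_left (ih y ?_) (hPm0 x y)
            have hsub : (Finset.univ.filter fun z => g y < g z)
                ⊂ (Finset.univ.filter fun z => g x < g z) := by
              rw [Finset.ssubset_def]
              constructor
              · intro z hz
                simp only [Finset.mem_filter, Finset.mem_univ, true_and] at hz ⊢
                exact lt_trans h hz
              · intro hcon
                have hmem : y ∈ Finset.univ.filter fun z => g x < g z := by simp [h]
                have := hcon hmem
                simp at this
            have := Finset.card_lt_card hsub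
            omega
          · exact le_refl _
        -- the KEY inequality : 1 + T' ≤ q * G' x
        have hoptA : ∀ y, y ∈ opt → g x < g y := by
          intro y hy
          have hx' : ¬ ∀ z, g z ≤ g x := fun hc => hopt ((hgo x).mpr hc)
          push_neg at hx'
          obtain ⟨w, hw⟩ := hx'
          exact lt_of_lt_of_le hw (((hgo y).mp hy) w)
        -- splits of T' and q by level
        have hsT' : ∑ y, (if g x < g y then Pm x y * G' y else 0)
            = (∑ y, (if g x < g y ∧ ℓ y < ℓ x then Pm x y * G' y else 0))
              + ∑ y, (if g x < g y ∧ ℓ x ≤ ℓ y then Pm x y * G' y else 0) := by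
          rw [← Finset.sum_add_distrib]
          refine Finset.sum_congr rfl fun y _ => ?_
          by_cases ha : g x < g y <;> rcases lt_or_ge (ℓ y) (ℓ x) with hb | hb
          · have h3 : ¬ ℓ x ≤ ℓ y := by omega
            simp [ha, hb, h3]
          · have h3 : ¬ ℓ y < ℓ x := by omega
            simp [ha, hb, h3]
          · have h3 : ¬ ℓ x ≤ ℓ y := by omega
            simp [ha, hb, h3]
          · have h3 : ¬ ℓ y < ℓ x := by omega
            simp [ha, hb, h3]
        have hsq : ∑ z, (if g x < g z then Pm x z else 0)
            = (∑ y, (if g x < g y ∧ ℓ y < ℓ x then Pm x y else 0))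
              + ∑ y, (if g x < g y ∧ ℓ x ≤ ℓ y then Pm x y else 0) := by
          rw [← Finset.sum_add_distrib]
          refine Finset.sum_congr rfl fun y _ => ?_
          by_cases ha : g x < g y <;> rcases lt_or_ge (ℓ y) (ℓ x) with hb | hb
          · have h3 : ¬ ℓ x ≤ ℓ y := by omega
            simp [ha, hb, h3]
          · have h3 : ¬ ℓ y < ℓ x := by omega
            simp [ha, hb, h3]
          · have h3 : ¬ ℓ x ≤ ℓ y := by omega
            simp [ha, hb, h3]
          · have h3 : ¬ ℓ y < ℓ x := by omega
            simp [ha, hb, h3]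
        have hsLowN : ∑ y, (if ℓ y < ℓ x then Pm x y * G' y else 0)
            = (∑ y, (if g x < g y ∧ ℓ y < ℓ x then Pm x y * G' y else 0))
              + ∑ y, (if ¬ g x < g y ∧ ℓ y < ℓ x then Pm x y * G' y else 0) := by
          rw [← Finset.sum_add_distrib]
          refine Finset.sum_congr rfl fun y _ => ?_
          by_cases ha : g x < g y <;> by_cases hb : ℓ y < ℓ x <;> simp [ha, hb]
        have hsLowD : ∑ y, (if ℓ y < ℓ x then Pm x y else 0)
            = (∑ y, (if g x < g y ∧ ℓ y < ℓ x then Pm x y else 0))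
              + ∑ y, (if ¬ g x < g y ∧ ℓ y < ℓ x then Pm x y else 0) := by
          rw [← Finset.sum_add_distrib]
          refine Finset.sum_congr rfl fun y _ => ?_
          by_cases ha : g x < g y <;> by_cases hb : ℓ y < ℓ x <;> simp [ha, hb]
        have hhigh : ∑ y, (if g x < g y ∧ ℓ x ≤ ℓ y then Pm x y * G' y else 0)
            ≤ (∑ y, (if g x < g y ∧ ℓ x ≤ ℓ y then Pm x y else 0)) * G' x := by
          rw [Finset.sum_mul]
          apply Finset.sum_le_sum
          intro y _
          split_ifs with h
          · exact mul_le_mul_of_nonneg_left (hMONO (ℓ y) y x le_rfl hl1 h.2) (hPm0 x y)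
          · simp
        have hlowB : (∑ y, (if ¬ g x < g y ∧ ℓ y < ℓ x then Pm x y else 0)) * G' x
            ≤ ∑ y, (if ¬ g x < g y ∧ ℓ y < ℓ x then Pm x y * G' y else 0) := by
          rw [Finset.sum_mul]
          apply Finset.sum_le_sum
          intro y _
          split_ifs with h
          · have hy1 : 1 ≤ ℓ y := by
              rcases Nat.eq_zero_or_pos (ℓ y) with h0 | h0
              · exact absurd (hoptA y ((hℓ0 y).mp h0)) h.1
              · exact h0
            have := hMONO (ℓ x) x y le_rfl hy1 (le_of_lt h.2)
            exact mul_le_mul_of_nonneg_left this (hPm0 x y)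
          · simp
        have hVE := hvalEq x hl1
        rw [hsLowN, hsLowD, add_mul] at hVE
        have hKey : 1 + ∑ y, (if g x < g y then Pm x y * G' y else 0)
            ≤ (∑ z, (if g x < g z then Pm x z else 0)) * G' x := by
          rw [hsT', hsq, add_mul]
          linarith
        have : (∑ z, (if g x < g z then Pm x z else 0)) * Gg x
            ≤ (∑ z, (if g x < g z then Pm x z else 0)) * G' x := by
          rw [hqGg]; linarith
        exact le_of_mul_le_mul_left this hqpos
  -- Gf = G'
  have hfacc : ∀ x y, (f x < f y) ↔ (ℓ y < ℓ x) := by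
    intro x y
    constructor
    · intro h
      rcases lt_trichotomy (ℓ y) (ℓ x) with hc | hc | hc
      · exact hc
      · have := hfconst y x hc; linarith
      · have := hfdec x y hc; linarith
    · intro h; exact hfdec y x h
  have hGfG' : ∀ n x, ℓ x ≤ n → Gf x = G' x := by
    intro n
    induction n with
    | zero =>
      intro x hx
      have h0 := Nat.le_zero.mp hx
      rw [hGfopt x ((hℓ0 x).mp h0), hG'0 x h0]
    | succ n ih =>
      intro x hx
      rcases Nat.eq_zero_or_pos (ℓ x) with h0 | h1
      · rw [hGfopt x ((hℓ0 x).mp h0), hG'0 x h0]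
      · have hopt : x ∉ opt := by
          intro hc
          have := (hℓ0 x).mpr hc
          omega
        have hrec := hGfrec x hopt
        have hterm : ∀ y, eaP Pm f x y * Gf y
            = (if y = x then (1 - ∑ z, (if ℓ z < ℓ x then Pm x z else 0)) * Gf x else 0)
              + (if ℓ y < ℓ x then Pm x y * Gf y else 0) := by
          intro y
          by_cases hy : y = x
          · subst hy
            simp only [eaP, if_pos rfl, lt_irrefl (ℓ y), if_false, if_true]
            simp only [hfacc]
            simp [lt_irrefl]
          · simp only [eaP, hy, if_false, hfacc]
            split_ifs <;> ring
        have hexp : ∑ y, eaP Pm f x y * Gf y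
            = (1 - ∑ z, (if ℓ z < ℓ x then Pm x z else 0)) * Gf x
              + ∑ y, (if ℓ y < ℓ x then Pm x y * Gf y else 0) := by
          simp only [hterm]
          rw [Finset.sum_add_distrib, Finset.sum_ite_eq' Finset.univ x]
          simp
        rw [hexp] at hrec
        have hGfsum : ∑ y, (if ℓ y < ℓ x then Pm x y * Gf y else 0)
            = ∑ y, (if ℓ y < ℓ x then Pm x y * G' y else 0) := by
          refine Finset.sum_congr rfl fun y _ => ?_
          split_ifs with h
          · rw [ih y (by omega)]
          · rfl
        rw [hGfsum] at hrec
        have hdp := hden (ℓ x) x h1 le_rfl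
        have hVE := hvalEq x h1
        have hfinal : (∑ y, (if ℓ y < ℓ x then Pm x y else 0)) * Gf x
            = (∑ y, (if ℓ y < ℓ x then Pm x y else 0)) * G' x := by nlinarith [hrec, hVE]
        exact mul_left_cancel₀ (ne_of_gt hdp) hfinal
  intro x
  have h1 : Gg x ≤ G' x := hGG' _ x le_rfl
  have h2 : Gf x = G' x := hGfG' (ℓ x) x le_rfl
  linarith
end

section
/- Consider the elitist (1+1) EA with bitwise mutation rate 1/n on {0,1}^n maximising the Two-Max function f(x) = n − min{h(x,0⃗), h(x,1⃗)}, where h is Hamming distance. The expected runtime (number of generations to reach an optimum 0⃗ or 1⃗) from any initial point is at most e·n·H_{⌊n/2⌋} = O(n log n), where H_m is the m-th harmonic number. -/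
/-- Bitwise mutation with rate `1/n`: probability of producing mutant `y`
from `x` is `(1/n)^{H(x,y)} (1-1/n)^{n-H(x,y)}` with `H` the Hamming
distance. -/
noncomputable def bitP (n : ℕ) (x y : Fin n → Bool) : ℝ :=
  (1 / n) ^ (hammingDist x y) * (1 - 1 / n) ^ (n - hammingDist x y)

/-- The Two-Max function `f(x) = n - min{H(x,0⃗), H(x,1⃗)}`. -/
noncomputable def twoMax (n : ℕ) (x : Fin n → Bool) : ℝ :=
  (n : ℝ) - (min (hammingDist x (fun _ => false)) (hammingDist x (fun _ => true)) : ℕ)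

/-!
Fitness-level argument. Let `d x = min{H(x,0⃗), H(x,1⃗)}`; the fitness of `x` is `n - d x`, so an
accepted step strictly decreases `d`. From a point with `d x = m`, each of the `m` single-bit flips
towards the nearest optimum is accepted and has probability `(1/n)(1-1/n)^{n-1} ≥ 1/(e n)`, so the
EA leaves level `m` with probability at least `m/(e n)` and spends at most `e n/m` generations
there in expectation. Summing over the levels `m ≤ ⌊n/2⌋` gives `e n H_{⌊n/2⌋}`.
-/

open Finset Function

section FitnessLevels

variable {S : Type*} [Fintype S] (Pm : S → S → ℝ) (f : S → ℝ)

noncomputable def improveProb (x : S) : ℝ :=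
  ∑ z, if f x < f z then Pm x z else 0

variable {Pm f}

lemma sum_le_improveProb {x : S} (hPm : ∀ z, 0 ≤ Pm x z) (T : Finset S)
    (hT : ∀ z ∈ T, f x < f z) : ∑ z ∈ T, Pm x z ≤ improveProb Pm f x := by
  calc ∑ z ∈ T, Pm x z = ∑ z ∈ T, if f x < f z then Pm x z else 0 :=
        sum_congr rfl fun z hz => (if_pos (hT z hz)).symm
    _ ≤ improveProb Pm f x :=
        sum_le_sum_of_subset_of_nonneg (subset_univ T) fun z _ _ => by
          split_ifs
          exacts [hPm z, le_rfl]

variable [DecidableEq S]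

lemma eaP_eq_ite_add_ite (x y : S) :
    eaP Pm f x y =
      (if y = x then 1 - improveProb Pm f x else 0) + (if f x < f y then Pm x y else 0) := by
  rcases eq_or_ne y x with rfl | hyx
  · simp [eaP, improveProb]
  · simp [eaP, hyx]

lemma le_inv_improveProb_add {G : S → ℝ} {x : S} {b : ℝ} (hPm : ∀ y, 0 ≤ Pm x y)
    (hrec : G x = 1 + ∑ y, eaP Pm f x y * G y) (hs : 0 < improveProb Pm f x)
    (hG : ∀ y, f x < f y → G y ≤ b) :
    G x ≤ (improveProb Pm f x)⁻¹ + b := by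
  have hsplit : improveProb Pm f x * G x = 1 + ∑ y, (if f x < f y then Pm x y else 0) * G y := by
    have hself : ∑ y, (if y = x then 1 - improveProb Pm f x else 0) * G y =
        (1 - improveProb Pm f x) * G x := by simp
    simp only [eaP_eq_ite_add_ite, add_mul, sum_add_distrib, hself] at hrec
    linear_combination hrec
  have himp : ∑ y, (if f x < f y then Pm x y else 0) * G y ≤ improveProb Pm f x * b := by
    rw [improveProb, sum_mul]
    refine sum_le_sum fun y _ => ?_
    split_ifs with hy
    exacts [mul_le_mul_of_nonneg_left (hG y hy) (hPm y), by simp]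
  refine le_of_mul_le_mul_left ?_ hs
  rw [mul_add, mul_inv_cancel₀ hs.ne']
  linarith

/-- Wegener's fitness-level method, with `p m` a lower bound on the probability of leaving
level `m`. -/
theorem le_sum_inv_of_fitnessLevels (hPm : ∀ x y, 0 ≤ Pm x y) {A : Set S} {G : S → ℝ}
    (hGA : ∀ x ∈ A, G x = 0) (hGrec : ∀ x ∉ A, G x = 1 + ∑ y, eaP Pm f x y * G y)
    (level : S → ℕ) (hlevel : ∀ x, level x = 0 → x ∈ A)
    (hlevel_lt : ∀ x y, f x < f y → level y < level x)
    (p : ℕ → ℝ) (hp : ∀ k, 0 < p (k + 1))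
    (hp_le : ∀ x, 0 < level x → p (level x) ≤ improveProb Pm f x) (x : S) :
    G x ≤ ∑ k ∈ range (level x), (p (k + 1))⁻¹ := by
  have hmono : Monotone fun m => ∑ k ∈ range m, (p (k + 1))⁻¹ := fun a b hab =>
    sum_le_sum_of_subset_of_nonneg (range_subset_range.2 hab) fun k _ _ => inv_nonneg.2 (hp k).le
  induction hx : level x using Nat.strong_induction_on generalizing x with
  | _ m ih =>
    by_cases hxA : x ∈ A
    · rw [hGA x hxA]
      exact sum_nonneg fun k _ => inv_nonneg.2 (hp k).le
    obtain ⟨m, rfl⟩ : ∃ k, m = k + 1 :=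
      Nat.exists_eq_succ_of_ne_zero fun h => hxA (hlevel x (hx.trans h))
    have hpx : p (m + 1) ≤ improveProb Pm f x := hx ▸ hp_le x (by omega)
    have hGx := le_inv_improveProb_add (b := ∑ k ∈ range m, (p (k + 1))⁻¹) (hPm x)
      (hGrec x hxA) ((hp m).trans_le hpx) fun y hy =>
        (ih _ (hx ▸ hlevel_lt x y hy) y rfl).trans (hmono (by have := hlevel_lt x y hy; omega))
    rw [sum_range_succ]
    linarith [inv_anti₀ (hp m) hpx]

end FitnessLevels

section Hamming

variable {ι : Type*} [Fintype ι] [DecidableEq ι] {β : ι → Type*} [∀ i, DecidableEq (β i)]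

lemma hammingDist_update_add_one {x y : ∀ i, β i} {i : ι} (h : x i ≠ y i) :
    hammingDist (update x i (y i)) y + 1 = hammingDist x y := by
  have hfilter : ({j | update x i (y i) j ≠ y j} : Finset ι) = ({j | x j ≠ y j} : Finset ι).erase i := by
    ext j
    rcases eq_or_ne j i with rfl | hji <;> simp [*]
  rw [hammingDist, hfilter, card_erase_add_one (by simpa using h), hammingDist]

lemma hammingDist_update_eq_one {x y : ∀ i, β i} {i : ι} (h : x i ≠ y i) :
    hammingDist x (update x i (y i)) = 1 := by
  have hfilter : ({j | x j ≠ update x i (y i) j} : Finset ι) = {i} := by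
    ext j
    rcases eq_or_ne j i with rfl | hji <;> simp [*]
  rw [hammingDist, hfilter, card_singleton]

end Hamming

lemma hammingDist_false_add_hammingDist_true {ι : Type*} [Fintype ι] (x : ι → Bool) :
    hammingDist x (fun _ => false) + hammingDist x (fun _ => true) = Fintype.card ι := by
  simpa [hammingDist] using card_filter_add_card_filter_not (s := univ) fun i => x i = true

lemma exp_neg_one_le_one_sub_inv_pow {n : ℕ} (hn : 1 ≤ n) :
    Real.exp (-1) ≤ (1 - 1 / (n : ℝ)) ^ (n - 1) := by
  obtain ⟨m, rfl⟩ := Nat.exists_eq_add_of_le' hn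
  have hinv : (1 - 1 / ((m + 1 : ℕ) : ℝ)) ^ m = ((1 + (m : ℝ)⁻¹) ^ m)⁻¹ := by
    rcases Nat.eq_zero_or_pos m with rfl | hm
    · simp
    · rw [← inv_pow]
      congr 1
      field_simp
      push_cast
      ring
  rw [Nat.add_sub_cancel, hinv, Real.exp_neg]
  exact inv_anti₀ (by positivity) Real.one_add_inv_pow_le_exp

lemma bitP_nonneg (n : ℕ) (x y : Fin n → Bool) : 0 ≤ bitP n x y := by
  have : 0 ≤ 1 - 1 / (n : ℝ) := sub_nonneg.2 (by simpa using Nat.cast_inv_le_one (α := ℝ) n)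
  unfold bitP
  positivity

section TwoMax

variable {n : ℕ}

def distToOptima (x : Fin n → Bool) : ℕ :=
  min (hammingDist x fun _ => false) (hammingDist x fun _ => true)

lemma twoMax_lt_twoMax_iff {x y : Fin n → Bool} :
    twoMax n x < twoMax n y ↔ distToOptima y < distToOptima x := by
  simp [twoMax, distToOptima]

lemma distToOptima_le_half (x : Fin n → Bool) : distToOptima x ≤ n / 2 := by
  have := hammingDist_false_add_hammingDist_true x
  rw [Fintype.card_fin] at this
  unfold distToOptima
  omega

lemma mem_optima_of_distToOptima_eq_zero {x : Fin n → Bool} (hx : distToOptima x = 0) :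
    x ∈ ({fun _ => false, fun _ => true} : Set (Fin n → Bool)) := by
  rcases Nat.min_eq_zero_iff.1 hx with h | h
  · exact Or.inl (hammingDist_eq_zero.1 h)
  · exact Or.inr (hammingDist_eq_zero.1 h)

/-- The single-bit flips towards the nearer optimum are `distToOptima x` distinct strict
improvements, each of probability `(1/n)(1-1/n)^{n-1}`. -/
lemma distToOptima_mul_le_improveProb (x : Fin n → Bool) :
    distToOptima x * (1 / n * (1 - 1 / n) ^ (n - 1) : ℝ) ≤
      improveProb (bitP n) (twoMax n) x := by
  obtain ⟨c, hc_le, hc⟩ : ∃ c : Fin n → Bool,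
      (∀ z, distToOptima z ≤ hammingDist z c) ∧ hammingDist x c = distToOptima x := by
    rcases min_choice (hammingDist x fun _ => false) (hammingDist x fun _ => true) with h | h
    exacts [⟨_, fun z => min_le_left _ _, h.symm⟩, ⟨_, fun z => min_le_right _ _, h.symm⟩]
  set D : Finset (Fin n) := {i | x i ≠ c i}
  have hD : #D = distToOptima x := hc
  have hinj : Set.InjOn (fun i => update x i (c i)) D := by
    intro i hi j _ hij
    by_contra hne
    have := congrFun hij i
    simp only [update_self, update_of_ne hne] at this
    exact (mem_filter.1 hi).2 this.symm
  have himp : ∀ z ∈ D.image fun i => update x i (c i), twoMax n x < twoMax n z := by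
    simp only [mem_image]
    rintro _ ⟨i, hi, rfl⟩
    rw [twoMax_lt_twoMax_iff]
    have := hammingDist_update_add_one (mem_filter.1 hi).2
    have := hc_le (update x i (c i))
    omega
  calc (distToOptima x : ℝ) * (1 / n * (1 - 1 / n) ^ (n - 1))
      = ∑ i ∈ D, bitP n x (update x i (c i)) := by
        rw [← hD, ← nsmul_eq_mul, ← sum_const]
        refine sum_congr rfl fun i hi => ?_
        rw [bitP, hammingDist_update_eq_one (mem_filter.1 hi).2, pow_one]
    _ = ∑ z ∈ D.image fun i => update x i (c i), bitP n x z := (sum_image hinj).symm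
    _ ≤ improveProb (bitP n) (twoMax n) x := sum_le_improveProb (bitP_nonneg n x) _ himp

end TwoMax

theorem stmt9_general (n : ℕ) (hn : 1 ≤ n) (G : (Fin n → Bool) → ℝ)
    (hGopt : ∀ x ∈ ({fun _ => false, fun _ => true} : Set (Fin n → Bool)), G x = 0)
    (hGrec : ∀ x ∉ ({fun _ => false, fun _ => true} : Set (Fin n → Bool)),
      G x = 1 + ∑ y, eaP (bitP n) (twoMax n) x y * G y) :
    ∀ x, G x ≤ Real.exp 1 * n * ∑ l ∈ Finset.range (n / 2), (1 : ℝ) / (l + 1) := by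
  intro x
  have hnR : (0 : ℝ) < n := by exact_mod_cast hn
  have hflip : 1 / (Real.exp 1 * n) ≤ 1 / n * (1 - 1 / n) ^ (n - 1) := by
    calc 1 / (Real.exp 1 * n) = 1 / n * Real.exp (-1) := by rw [Real.exp_neg]; field_simp
      _ ≤ _ := by gcongr; exact exp_neg_one_le_one_sub_inv_pow hn
  calc G x ≤ ∑ k ∈ range (distToOptima x), (((k + 1 : ℕ) : ℝ) / (Real.exp 1 * n))⁻¹ :=
        le_sum_inv_of_fitnessLevels (bitP_nonneg n) hGopt hGrec distToOptima
          (fun _ => mem_optima_of_distToOptima_eq_zero) (fun _ _ => twoMax_lt_twoMax_iff.1)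
          (fun m => m / (Real.exp 1 * n)) (fun _ => by positivity)
          (fun y _ => by
            rw [div_eq_mul_one_div]
            exact (mul_le_mul_of_nonneg_left hflip (by positivity)).trans
              (distToOptima_mul_le_improveProb y)) x
    _ ≤ ∑ k ∈ range (n / 2), (((k + 1 : ℕ) : ℝ) / (Real.exp 1 * n))⁻¹ :=
        sum_le_sum_of_subset_of_nonneg (range_subset_range.2 (distToOptima_le_half x))
          fun _ _ _ => by positivity
    _ = Real.exp 1 * n * ∑ l ∈ Finset.range (n / 2), (1 : ℝ) / (l + 1) := by
        rw [mul_sum]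
        refine sum_congr rfl fun k _ => ?_
        push_cast
        field_simp

/-- The elitist (1+1) EA with bitwise mutation rate `1/n` on the Two-Max
function has expected runtime at most `e · n · H_{⌊n/2⌋}` from every initial
point, `H_m` being the `m`-th harmonic number. -/
theorem stmt9 (n : ℕ) (hn : 1 ≤ n) (G : (Fin n → Bool) → ℝ)
    (hG0 : ∀ x, 0 ≤ G x)
    (hGopt : ∀ x ∈ ({fun _ => false, fun _ => true} : Set (Fin n → Bool)), G x = 0)
    (hGrec : ∀ x ∉ ({fun _ => false, fun _ => true} : Set (Fin n → Bool)),
      G x = 1 + ∑ y, eaP (bitP n) (twoMax n) x y * G y) :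
    ∀ x, G x ≤ Real.exp 1 * n * ∑ l ∈ Finset.range (n / 2), (1 : ℝ) / (l + 1) :=
  stmt9_general n hn G hGopt hGrec
end

section
/- Let f be any fitness function on a finite set S with optimal set S_opt and level sets S_0 = S_opt, S_1, …, S_L (f strictly decreasing in level index). Choose numbers m_0 = 0 < m_1 < … < m_L. Suppose P^m is a mutation kernel such that for every x ∈ S_l (l ≥ 1): for all k < l, (1 + Σ_{j<k} Σ_{y∈S_j} P^m(x,y) m_j)/(Σ_{j<k} Σ_{y∈S_j} P^m(x,y)) > m_k, and (1 + Σ_{j<l} Σ_{y∈S_j} P^m(x,y) m_j)/(Σ_{j<l} Σ_{y∈S_j} P^m(x,y)) = m_l. Then the elitist (1+1) EA with this kernel has expected runtime G(x) = m_l for x ∈ S_l on f, and f is the easiest function (minimal runtime pointwise) among all fitness functions with optimal set S_opt for this EA. -/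
/-- The quotient appearing in the level construction, with the prescribed
level values `m`: `(1 + Σ_{ℓ y < k} Pm x y * m (ℓ y)) / (Σ_{ℓ y < k} Pm x y)`. -/
noncomputable def Qm {S : Type*} [Fintype S]
    (Pm : S → S → ℝ) (ℓ : S → ℕ) (m : ℕ → ℝ) (k : ℕ) (x : S) : ℝ :=
  (1 + ∑ y, (if ℓ y < k then Pm x y * m (ℓ y) else 0)) /
    (∑ y, (if ℓ y < k then Pm x y else 0))

/-- Hardest may become easiest: for any fitness function `f` with level sets
`S_0 = S_opt, S_1, …, S_L` (encoded by `ℓ`) and prescribed values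
`m_0 = 0 < m_1 < ⋯ < m_L`, if `P^m` is a mutation kernel such that for every
`x ∈ S_l` (`l ≥ 1`) the partially-summed quotient is `> m_k` for `1 ≤ k < l`
and equals `m_l` at `k = l`, then the expected runtime of the resulting
elitist (1+1) EA on `f` is exactly `m_{ℓ x}`, and `f` is the easiest function
among all fitness functions with optimal set `S_opt` for this EA. -/
theorem stmt15 {S : Type*} [Fintype S] [DecidableEq S]
    (opt : Set S) (f : S → ℝ) (ℓ : S → ℕ) (L : ℕ) (m : ℕ → ℝ)
    (hL : 1 ≤ L)
    (hℓ0 : ∀ x, ℓ x = 0 ↔ x ∈ opt)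
    (hℓL : ∀ x, ℓ x ≤ L) (hsurj : ∀ l ≤ L, ∃ x, ℓ x = l)
    (hfconst : ∀ x y, ℓ x = ℓ y → f x = f y)
    (hfdec : ∀ x y, ℓ x < ℓ y → f y < f x)
    (hm0 : m 0 = 0) (hminc : ∀ l, l < L → m l < m (l + 1))
    (Pm : S → S → ℝ)
    (hPm0 : ∀ x y, 0 ≤ Pm x y) (hPm1 : ∀ x, ∑ y, Pm x y = 1)
    (hQgt : ∀ x k, 1 ≤ ℓ x → 1 ≤ k → k < ℓ x → m k < Qm Pm ℓ m k x)
    (hQeq : ∀ x, 1 ≤ ℓ x → Qm Pm ℓ m (ℓ x) x = m (ℓ x)) :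
      (∀ G : S → ℝ,
        (∀ x, 0 ≤ G x) → (∀ x ∈ opt, G x = 0) →
        (∀ x ∉ opt, G x = 1 + ∑ y, eaP Pm f x y * G y) →
        (∀ x, G x = m (ℓ x)) ∧
        (∀ g Gg : S → ℝ,
          (∀ x, x ∈ opt ↔ ∀ y, g y ≤ g x) →
          (∀ x, 0 ≤ Gg x) → (∀ x ∈ opt, Gg x = 0) →
          (∀ x ∉ opt, Gg x = 1 + ∑ y, eaP Pm g x y * Gg y) →
          ∀ x, G x ≤ Gg x)) := by
  classical
  -- monotonicity of m on [0, L]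
  have hmlt : ∀ k, k ≤ L → ∀ j < k, m j < m k := by
    intro k
    induction k with
    | zero => intro _ j hj; omega
    | succ n ih =>
      intro hn j hj
      have hstep : m n < m (n + 1) := hminc n (by omega)
      rcases Nat.lt_succ_iff_lt_or_eq.mp hj with h | h
      · exact lt_trans (ih (by omega) j h) hstep
      · subst h; exact hstep
  have hmle : ∀ j k, k ≤ L → j ≤ k → m j ≤ m k := by
    intro j k hk hjk
    rcases eq_or_lt_of_le hjk with rfl | h
    · exact le_refl _
    · exact (hmlt k hk j h).le
  have hm_nonneg : ∀ x : S, 0 ≤ m (ℓ x) := by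
    intro x
    have := hmle 0 (ℓ x) (hℓL x) (Nat.zero_le _)
    rwa [hm0] at this
  -- decomposition of the EA sum
  have sum_eaP : ∀ (q H : S → ℝ) (x : S),
      ∑ y, eaP Pm q x y * H y
        = (1 - ∑ z, (if q x < q z then Pm x z else 0)) * H x
          + ∑ y, (if q x < q y then Pm x y * H y else 0) := by
    intro q H x
    have hterm : ∀ y, eaP Pm q x y * H y
        = (if y = x then (1 - ∑ z, (if q x < q z then Pm x z else 0)) * H x else 0)
          + (if q x < q y then Pm x y * H y else 0) := by
      intro y
      by_cases hy : y = x
      · subst hy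
        simp [eaP, lt_irrefl]
      · by_cases hq : q x < q y <;> simp [eaP, hy, hq]
    rw [Finset.sum_congr rfl (fun y _ => hterm y), Finset.sum_add_distrib,
      Finset.sum_ite_eq' Finset.univ x]
    simp
  -- core inequality from hQeq
  have coreB : ∀ x : S, 1 ≤ ℓ x →
      ∑ y, (if ℓ y < ℓ x then Pm x y * (m (ℓ x) - m (ℓ y)) else 0) ≤ 1 := by
    intro x hx
    have hsum : ∑ y, (if ℓ y < ℓ x then Pm x y * (m (ℓ x) - m (ℓ y)) else 0)
        = m (ℓ x) * (∑ y, (if ℓ y < ℓ x then Pm x y else 0))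
          - ∑ y, (if ℓ y < ℓ x then Pm x y * m (ℓ y) else 0) := by
      rw [Finset.mul_sum, ← Finset.sum_sub_distrib]
      refine Finset.sum_congr rfl fun y _ => ?_
      by_cases h : ℓ y < ℓ x
      · simp only [if_pos h]; ring
      · simp [h]
    rw [hsum]
    by_cases hs0 : (∑ y, (if ℓ y < ℓ x then Pm x y else 0)) = 0
    · have hall : ∀ y, ℓ y < ℓ x → Pm x y = 0 := by
        intro y hy
        have h := (Finset.sum_eq_zero_iff_of_nonneg (fun z _ => by
          by_cases hz : ℓ z < ℓ x <;> simp [hz, hPm0])).mp hs0 y (Finset.mem_univ y)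
        simpa [hy] using h
      have hN0 : (∑ y, (if ℓ y < ℓ x then Pm x y * m (ℓ y) else 0)) = 0 :=
        Finset.sum_eq_zero fun y _ => by
          by_cases h : ℓ y < ℓ x
          · simp [h, hall y h]
          · simp [h]
      rw [hs0, hN0]; norm_num
    · have hq := hQeq x hx
      simp only [Qm] at hq
      rw [div_eq_iff hs0] at hq
      linarith
  intro G hG0 hGopt hGrec
  -- first part: G x = m (ℓ x)
  have part1 : ∀ n, ∀ x : S, ℓ x = n → G x = m n := by
    intro n
    induction n using Nat.strong_induction_on with
    | _ n ih =>
      intro x hxn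
      rcases Nat.eq_zero_or_pos n with rfl | hn
      · rw [hm0]; exact hGopt x ((hℓ0 x).mp hxn)
      · have hxopt : x ∉ opt := fun hmem => by
          have := (hℓ0 x).mpr hmem; omega
        have hrec := hGrec x hxopt
        rw [sum_eaP f G x] at hrec
        have e1 : (∑ z, (if f x < f z then Pm x z else 0))
            = ∑ z, (if ℓ z < n then Pm x z else 0) := by
          refine Finset.sum_congr rfl fun z _ => ?_
          have hiff : (f x < f z) ↔ (ℓ z < n) := by
            constructor
            · intro hlt
              by_contra hc
              push_neg at hc
              rcases eq_or_lt_of_le hc with he | hgt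
              · rw [hfconst x z (by omega)] at hlt; exact lt_irrefl _ hlt
              · exact absurd hlt (not_lt.mpr (hfdec x z (by omega)).le)
            · intro hlt; exact hfdec z x (by omega)
          by_cases h : ℓ z < n
          · rw [if_pos (hiff.mpr h), if_pos h]
          · rw [if_neg (fun hf => h (hiff.mp hf)), if_neg h]
        have e2 : (∑ y, (if f x < f y then Pm x y * G y else 0))
            = ∑ y, (if ℓ y < n then Pm x y * m (ℓ y) else 0) := by
          refine Finset.sum_congr rfl fun y _ => ?_
          have hiff : (f x < f y) ↔ (ℓ y < n) := by
            constructor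
            · intro hlt
              by_contra hc
              push_neg at hc
              rcases eq_or_lt_of_le hc with he | hgt
              · rw [hfconst x y (by omega)] at hlt; exact lt_irrefl _ hlt
              · exact absurd hlt (not_lt.mpr (hfdec x y (by omega)).le)
            · intro hlt; exact hfdec y x (by omega)
          by_cases h : ℓ y < n
          · rw [if_pos (hiff.mpr h), if_pos h, ih (ℓ y) h y rfl]
          · rw [if_neg (fun hf => h (hiff.mp hf)), if_neg h]
        rw [e1, e2] at hrec
        have hkey : (∑ z, (if ℓ z < n then Pm x z else 0)) * G x
            = 1 + ∑ y, (if ℓ y < n then Pm x y * m (ℓ y) else 0) := by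
          linear_combination hrec
        have hNnn : 0 ≤ ∑ y, (if ℓ y < n then Pm x y * m (ℓ y) else 0) :=
          Finset.sum_nonneg fun y _ => by
            by_cases h : ℓ y < n
            · simp only [if_pos h]; exact mul_nonneg (hPm0 x y) (hm_nonneg y)
            · simp [h]
        have hs0 : (∑ z, (if ℓ z < n then Pm x z else 0)) ≠ 0 := by
          intro h0
          rw [h0, zero_mul] at hkey
          linarith
        have hq := hQeq x (by omega)
        simp only [Qm, hxn] at hq
        rw [div_eq_iff hs0] at hq
        have heq : (∑ z, (if ℓ z < n then Pm x z else 0)) * G x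
            = (∑ z, (if ℓ z < n then Pm x z else 0)) * m n := by
          rw [hkey]; linear_combination hq
        exact mul_left_cancel₀ hs0 heq
  refine ⟨fun x => part1 (ℓ x) x rfl, ?_⟩
  intro g Gg hgopt hGg0 hGgopt hGgrec
  suffices hsuff : ∀ x, m (ℓ x) ≤ Gg x by
    intro x; rw [part1 (ℓ x) x rfl]; exact hsuff x
  by_contra hcon
  push_neg at hcon
  have hSne : Nonempty S := by
    obtain ⟨x, -⟩ := hsurj L (le_refl L)
    exact ⟨x⟩
  -- minimizers of x ↦ Gg x - m (ℓ x)
  obtain ⟨x1, -, hx1⟩ := Finset.exists_min_image Finset.univ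
    (fun x => Gg x - m (ℓ x)) Finset.univ_nonempty
  set M : Finset S :=
    Finset.univ.filter (fun x => ∀ y, Gg x - m (ℓ x) ≤ Gg y - m (ℓ y)) with hM
  have hMne : M.Nonempty := by
    refine ⟨x1, Finset.mem_filter.mpr ⟨Finset.mem_univ x1, fun y => ?_⟩⟩
    exact hx1 y (Finset.mem_univ y)
  obtain ⟨x0, hx0M, hx0max⟩ := Finset.exists_max_image M g hMne
  have hx0min : ∀ y, Gg x0 - m (ℓ x0) ≤ Gg y - m (ℓ y) :=
    (Finset.mem_filter.mp hx0M).2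
  have hneg : Gg x0 - m (ℓ x0) < 0 := by
    obtain ⟨x, hx⟩ := hcon
    exact lt_of_le_of_lt (hx0min x) (by linarith)
  have hx0opt : x0 ∉ opt := by
    intro hmem
    have h1 : Gg x0 = 0 := hGgopt x0 hmem
    have h2 : ℓ x0 = 0 := (hℓ0 x0).mpr hmem
    rw [h1, h2, hm0] at hneg
    linarith
  have hlx0 : 1 ≤ ℓ x0 := by
    rcases Nat.eq_zero_or_pos (ℓ x0) with h | h
    · exact absurd ((hℓ0 x0).mp h) hx0opt
    · exact h
  have hrec := hGgrec x0 hx0opt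
  rw [sum_eaP g Gg x0] at hrec
  have hkey : (∑ z, (if g x0 < g z then Pm x0 z else 0)) * Gg x0
      = 1 + ∑ y, (if g x0 < g y then Pm x0 y * Gg y else 0) := by
    linear_combination hrec
  have htnn : 0 ≤ ∑ z, (if g x0 < g z then Pm x0 z else 0) :=
    Finset.sum_nonneg fun z _ => by by_cases hz : g x0 < g z <;> simp [hz, hPm0]
  have ht0 : (∑ z, (if g x0 < g z then Pm x0 z else 0)) ≠ 0 := by
    intro h0
    have hall : ∀ z, g x0 < g z → Pm x0 z = 0 := by
      intro z hz
      have h := (Finset.sum_eq_zero_iff_of_nonneg (fun w _ => by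
        by_cases hw : g x0 < g w <;> simp [hw, hPm0])).mp h0 z (Finset.mem_univ z)
      simpa [hz] using h
    have hT0 : (∑ y, (if g x0 < g y then Pm x0 y * Gg y else 0)) = 0 :=
      Finset.sum_eq_zero fun y _ => by
        by_cases hy : g x0 < g y
        · simp [hy, hall y hy]
        · simp [hy]
    rw [h0, zero_mul, hT0] at hkey
    linarith
  -- strict lower bound on the drift sum
  have hstrict : (∑ y, (if g x0 < g y
        then Pm x0 y * (m (ℓ y) + (Gg x0 - m (ℓ x0))) else 0))
      < ∑ y, (if g x0 < g y then Pm x0 y * Gg y else 0) := by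
    obtain ⟨y0, hy0g, hy0p⟩ : ∃ y, g x0 < g y ∧ 0 < Pm x0 y := by
      by_contra hno
      push_neg at hno
      apply ht0
      apply Finset.sum_eq_zero
      intro z _
      by_cases hz : g x0 < g z
      · simp only [if_pos hz]; exact le_antisymm (hno z hz) (hPm0 x0 z)
      · simp [hz]
    apply Finset.sum_lt_sum
    · intro y _
      by_cases hy : g x0 < g y
      · simp only [if_pos hy]
        refine mul_le_mul_of_nonneg_left ?_ (hPm0 x0 y)
        have := hx0min y
        linarith
      · simp [hy]
    · refine ⟨y0, Finset.mem_univ y0, ?_⟩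
      simp only [if_pos hy0g]
      refine mul_lt_mul_of_pos_left ?_ hy0p
      have hy0notM : y0 ∉ M := by
        intro hmem
        exact absurd hy0g (not_lt.mpr (hx0max y0 hmem))
      have hnall : ¬ (∀ y, Gg y0 - m (ℓ y0) ≤ Gg y - m (ℓ y)) := by
        intro hall
        exact hy0notM (Finset.mem_filter.mpr ⟨Finset.mem_univ y0, hall⟩)
      push_neg at hnall
      obtain ⟨z, hz⟩ := hnall
      have := hx0min z
      linarith
  have hsplit : (∑ y, (if g x0 < g y
        then Pm x0 y * (m (ℓ y) + (Gg x0 - m (ℓ x0))) else 0))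
      = (∑ y, (if g x0 < g y then Pm x0 y * m (ℓ y) else 0))
        + (Gg x0 - m (ℓ x0)) * ∑ z, (if g x0 < g z then Pm x0 z else 0) := by
    rw [Finset.mul_sum, ← Finset.sum_add_distrib]
    refine Finset.sum_congr rfl fun y _ => ?_
    by_cases hy : g x0 < g y
    · simp only [if_pos hy]; ring
    · simp [hy]
  have hmain : 1 < ∑ y, (if g x0 < g y
      then Pm x0 y * (m (ℓ x0) - m (ℓ y)) else 0) := by
    have e : ∑ y, (if g x0 < g y then Pm x0 y * (m (ℓ x0) - m (ℓ y)) else 0)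
        = m (ℓ x0) * (∑ z, (if g x0 < g z then Pm x0 z else 0))
          - ∑ y, (if g x0 < g y then Pm x0 y * m (ℓ y) else 0) := by
      rw [Finset.mul_sum, ← Finset.sum_sub_distrib]
      refine Finset.sum_congr rfl fun y _ => ?_
      by_cases hy : g x0 < g y
      · simp only [if_pos hy]; ring
      · simp [hy]
    rw [e]
    have h2 : m (ℓ x0) * (∑ z, (if g x0 < g z then Pm x0 z else 0))
        + (Gg x0 - m (ℓ x0)) * (∑ z, (if g x0 < g z then Pm x0 z else 0))
        = 1 + ∑ y, (if g x0 < g y then Pm x0 y * Gg y else 0) := by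
      linear_combination hkey
    have h1 : (∑ y, (if g x0 < g y then Pm x0 y * m (ℓ y) else 0))
        + (Gg x0 - m (ℓ x0)) * (∑ z, (if g x0 < g z then Pm x0 z else 0))
        < ∑ y, (if g x0 < g y then Pm x0 y * Gg y else 0) := by
      rw [← hsplit]; exact hstrict
    linarith
  have hcomp : (∑ y, (if g x0 < g y then Pm x0 y * (m (ℓ x0) - m (ℓ y)) else 0))
      ≤ ∑ y, (if ℓ y < ℓ x0 then Pm x0 y * (m (ℓ x0) - m (ℓ y)) else 0) := by
    apply Finset.sum_le_sum
    intro y _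
    by_cases h1 : g x0 < g y <;> by_cases h2 : ℓ y < ℓ x0
    · simp [h1, h2]
    · simp only [if_pos h1, if_neg h2]
      have hle : m (ℓ x0) ≤ m (ℓ y) := hmle (ℓ x0) (ℓ y) (hℓL y) (not_lt.mp h2)
      exact mul_nonpos_iff.mpr (Or.inl ⟨hPm0 x0 y, by linarith⟩)
    · simp only [if_neg h1, if_pos h2]
      have hle : m (ℓ y) ≤ m (ℓ x0) := hmle (ℓ y) (ℓ x0) (hℓL x0) h2.le
      exact mul_nonneg (hPm0 x0 y) (by linarith)
    · simp [h1, h2]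
  have hB := coreB x0 hlx0
  linarith
end
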